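/- arXiv:math/0607433 — 3 statements merged into one kernel-verified Lean document; each statement's English description precedes it below -/
import Mathlib

section
/- Let V ⊆ Δ be a Borel set with ν^∞(V) > 0. Then for ν^∞-almost every t ∈ V and all γ, δ ∈ (0,1) there exists k₀ ∈ ℕ such that for every k ≥ k₀ there is a Borel set W_k ⊆ V with: (1) t ∈ W_k; (2) ν^∞(W_k) > 0; (3) for ν^∞-almost every u ∈ W_k there is a Borel set S ⊆ Δ with ν^∞(S) ≥ 1 − γ such that ν(p_{k+1}(W_k(u,k,s))) ≥ 1 − δ for every s ∈ S. -/
open MeasureTheory Metric Set Filter Topology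

noncomputable section

set_option linter.unusedSectionVars false

open MeasureTheory Metric Set Filter Topology
open scoped ENNReal

noncomputable section

namespace Statement2Aux

variable {X : Type*} [MeasurableSpace X]

def proj (k : ℕ) (φ : ℕ → X) : Fin k → X := fun i => φ i

def tail (k : ℕ) (φ : ℕ → X) : ℕ → X := fun j => φ (k + j)

def splice (k : ℕ) (p : Fin k → X) (w : ℕ → X) : ℕ → X :=
  fun i => if h : i < k then p ⟨i, h⟩ else w (i - k)

lemma measurable_proj (k : ℕ) : Measurable (proj (X := X) k) :=
  measurable_pi_lambda _ fun _ => measurable_pi_apply _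

lemma measurable_tail (k : ℕ) : Measurable (tail (X := X) k) :=
  measurable_pi_lambda _ fun _ => measurable_pi_apply _

lemma measurable_splice (k : ℕ) :
    Measurable (fun q : (Fin k → X) × (ℕ → X) => splice k q.1 q.2) := by
  apply measurable_pi_lambda
  intro i
  unfold splice
  split_ifs with h
  · exact (measurable_pi_apply _).comp measurable_fst
  · exact (measurable_pi_apply _).comp measurable_snd

lemma splice_proj_tail (k : ℕ) (φ : ℕ → X) : splice k (proj k φ) (tail k φ) = φ := by
  funext i
  unfold splice proj tail
  split_ifs with h
  · rfl
  · congr 1; omega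

def finSplit (k m : ℕ) (q : Fin (k + m) → X) : (Fin k → X) × (Fin m → X) :=
  (fun i => q (Fin.castAdd m i), fun j => q (Fin.natAdd k j))

lemma measurable_finSplit (k m : ℕ) : Measurable (finSplit (X := X) k m) :=
  Measurable.prodMk (measurable_pi_lambda _ fun _ => measurable_pi_apply _)
    (measurable_pi_lambda _ fun _ => measurable_pi_apply _)

variable (ν : Measure X) [IsProbabilityMeasure ν]

lemma measurePreserving_finSplit (k m : ℕ) :
    MeasurePreserving (finSplit (X := X) k m) (Measure.pi fun _ => ν)
      ((Measure.pi fun _ : Fin k => ν).prod (Measure.pi fun _ : Fin m => ν)) := by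
  have h1 := measurePreserving_piCongrLeft (fun _ : Fin (k + m) => ν) (finSumFinEquiv (m := k) (n := m))
  have h2 := measurePreserving_sumPiEquivProdPi (X := fun _ : Fin k ⊕ Fin m => X)
    (fun _ => ν)
  have h3 := h2.comp (h1.symm (MeasurableEquiv.piCongrLeft (fun _ => X) finSumFinEquiv))
  convert h3 using 1
  rfl


lemma cylinder_rep {B : Set (ℕ → X)} (hB : B ∈ measurableCylinders fun _ : ℕ => X) :
    ∃ m : ℕ, ∃ D : Set (Fin m → X), MeasurableSet D ∧ B = proj m ⁻¹' D := by
  obtain ⟨s, S, hS, rfl⟩ := (mem_measurableCylinders _).1 hB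
  refine ⟨s.sup id + 1, (fun (q : Fin (s.sup id + 1) → X) (i : s) =>
      q ⟨(i : ℕ), Nat.lt_succ_of_le (Finset.le_sup (f := id) i.2)⟩) ⁻¹' S, ?_, ?_⟩
  · exact (measurable_pi_lambda _ fun _ => measurable_pi_apply _) hS
  · ext φ
    simp only [mem_cylinder, Set.mem_preimage]
    rfl

variable (μ : Measure (ℕ → X)) [IsProbabilityMeasure μ]

theorem measurePreserving_proj
    (hμ : ∀ k : ℕ, μ.map (fun t (i : Fin k) => t i) = Measure.pi fun _ => ν) (k : ℕ) :
    MeasurePreserving (proj k) μ (Measure.pi fun _ : Fin k => ν) :=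
  ⟨measurable_proj k, hμ k⟩

theorem marg (hμ : ∀ k : ℕ, μ.map (fun t (i : Fin k) => t i) = Measure.pi fun _ => ν)
    (k : ℕ) {D : Set (Fin k → X)} (hD : MeasurableSet D) :
    μ (proj k ⁻¹' D) = Measure.pi (fun _ : Fin k => ν) D :=
  (measurePreserving_proj ν μ hμ k).measure_preimage hD.nullMeasurableSet

def extract (k : ℕ) (φ : ℕ → X) : (Fin k → X) × (ℕ → X) := (proj k φ, tail k φ)

lemma measurable_extract (k : ℕ) : Measurable (extract (X := X) k) :=
  (measurable_proj k).prodMk (measurable_tail k)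

theorem measurePreserving_extract
    (hμ : ∀ k : ℕ, μ.map (fun t (i : Fin k) => t i) = Measure.pi fun _ => ν) (k : ℕ) :
    MeasurePreserving (extract k) μ ((Measure.pi fun _ : Fin k => ν).prod μ) := by
  refine ⟨measurable_extract k, ?_⟩
  refine (Measure.prod_eq ?_).symm
  intro A B hA hB
  -- the two measures in B
  set ρ := μ.map (extract k) with hρ
  have hρapp : ∀ {C : Set ((Fin k → X) × (ℕ → X))}, MeasurableSet C →
      ρ C = μ (extract k ⁻¹' C) := fun hC => Measure.map_apply (measurable_extract k) hC
  set m₁ : Measure (ℕ → X) := (ρ.restrict (Prod.fst ⁻¹' A)).map Prod.snd with hm₁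
  have hm₁app : ∀ {B' : Set (ℕ → X)}, MeasurableSet B' → m₁ B' = ρ (A ×ˢ B') := by
    intro B' hB'
    rw [hm₁, Measure.map_apply measurable_snd hB',
      Measure.restrict_apply (measurable_snd hB')]
    congr 1
    ext q
    simp [Set.mem_prod, and_comm]
  set m₂ : Measure (ℕ → X) := (Measure.pi (fun _ : Fin k => ν) A) • μ with hm₂
  have hfin₁ : IsFiniteMeasure m₁ := by
    constructor
    rw [hm₁app MeasurableSet.univ, hρapp (hA.prod MeasurableSet.univ)]
    exact measure_lt_top μ _
  have hfin₂ : IsFiniteMeasure m₂ := by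
    constructor
    rw [hm₂]
    simp only [Measure.smul_apply, smul_eq_mul]
    exact ENNReal.mul_lt_top (measure_lt_top _ _) (measure_lt_top _ _)
  have hkey : m₁ = m₂ := by
    refine ext_of_generate_finite (measurableCylinders fun _ : ℕ => X)
      (generateFrom_measurableCylinders).symm isPiSystem_measurableCylinders ?_ ?_
    · intro B' hB'
      obtain ⟨m, D, hD, rfl⟩ := cylinder_rep hB'
      have hBmeas : MeasurableSet (proj (X := X) m ⁻¹' D) := measurable_proj m hD
      rw [hm₁app hBmeas, hρapp (hA.prod hBmeas)]
      have hset : extract k ⁻¹' (A ×ˢ (proj m ⁻¹' D))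
          = proj (k + m) ⁻¹' (finSplit k m ⁻¹' (A ×ˢ D)) := by
        ext φ
        simp only [Set.mem_preimage, extract, Set.mem_prod, finSplit]
        constructor
        · rintro ⟨h1, h2⟩
          exact ⟨h1, h2⟩
        · rintro ⟨h1, h2⟩
          exact ⟨h1, h2⟩
      rw [hset, marg ν μ hμ _ ((measurable_finSplit k m) (hA.prod hD)),
        (measurePreserving_finSplit ν k m).measure_preimage
          ((hA.prod hD)).nullMeasurableSet,
        Measure.prod_prod]
      rw [hm₂]
      simp only [Measure.smul_apply, smul_eq_mul]
      rw [marg ν μ hμ _ hD]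
    · rw [hm₁app MeasurableSet.univ, hρapp (hA.prod MeasurableSet.univ)]
      have : extract (X := X) k ⁻¹' (A ×ˢ (Set.univ : Set (ℕ → X))) = proj k ⁻¹' A := by
        ext φ; simp [extract]
      rw [this, marg ν μ hμ _ hA, hm₂]
      simp
  calc ρ (A ×ˢ B) = m₁ B := (hm₁app hB).symm
    _ = m₂ B := by rw [hkey]
    _ = Measure.pi (fun _ : Fin k => ν) A * μ B := by rw [hm₂]; simp [mul_comm]



/-- The slab set in product form. -/
def slabZ (k : ℕ) (V : Set (ℕ → X)) : Set ((Fin k → X) × (ℕ → X)) :=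
  (fun q : (Fin k → X) × (ℕ → X) => splice k q.1 q.2) ⁻¹' V

lemma measurableSet_slabZ {V : Set (ℕ → X)} (k : ℕ) (hV : MeasurableSet V) :
    MeasurableSet (slabZ k V) :=
  measurable_splice k hV

/-- Slab measure function. -/
def G (μ : Measure (ℕ → X)) (k : ℕ) (V : Set (ℕ → X)) (p : Fin k → X) : ℝ≥0∞ :=
  μ {w | splice k p w ∈ V}

lemma measurable_G {V : Set (ℕ → X)} (μ : Measure (ℕ → X)) [SFinite μ] (k : ℕ)
    (hV : MeasurableSet V) :
    Measurable (G μ k V) := by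
  have : G μ k V = fun p => μ (Prod.mk p ⁻¹' slabZ k V) := rfl
  rw [this]
  exact measurable_measure_prodMk_left (measurableSet_slabZ k hV)

lemma G_ne_top {V : Set (ℕ → X)} (μ : Measure (ℕ → X)) [IsProbabilityMeasure μ] (k : ℕ)
    (p : Fin k → X) :
    G μ k V p ≠ ⊤ := measure_ne_top μ _

/-- The natural filtration of the first `k` coordinates. -/
def ℱnat : Filtration ℕ (MeasurableSpace.pi : MeasurableSpace (ℕ → X)) where
  seq k := MeasurableSpace.comap (proj k) inferInstance
  mono' := by
    intro k l hkl
    show MeasurableSpace.comap (proj k) inferInstance ≤ MeasurableSpace.comap (proj l) inferInstance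
    have : proj (X := X) k = (fun (q : Fin l → X) (i : Fin k) => q ⟨i, lt_of_lt_of_le i.2 hkl⟩)
        ∘ proj l := rfl
    rw [this, ← MeasurableSpace.comap_comp]
    exact MeasurableSpace.comap_mono
      (measurable_iff_comap_le.1 (measurable_pi_lambda _ fun _ => measurable_pi_apply _))
  le' k := measurable_iff_comap_le.1 (measurable_proj k)

lemma iSup_ℱnat : (⨆ k, (ℱnat (X := X)) k) = MeasurableSpace.pi := by
  apply le_antisymm
  · exact iSup_le fun k => (ℱnat (X := X)).le k
  · refine iSup_le (f := fun i : ℕ =>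
      MeasurableSpace.comap (fun φ : ℕ → X => φ i) inferInstance) fun i => ?_
    show MeasurableSpace.comap (fun φ : ℕ → X => φ i) inferInstance ≤ _
    have : (fun φ : ℕ → X => φ i)
        = (fun (q : Fin (i + 1) → X) => q ⟨i, Nat.lt_succ_self i⟩) ∘ proj (i + 1) := rfl
    rw [this, ← MeasurableSpace.comap_comp]
    exact le_trans (MeasurableSpace.comap_mono
      (measurable_iff_comap_le.1 (measurable_pi_apply _)))
      (le_iSup (fun k => ((ℱnat (X := X)) k : MeasurableSpace (ℕ → X))) (i + 1))

/-- key lintegral identity -/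
lemma lintegral_G {V : Set (ℕ → X)} (hμ : ∀ k : ℕ, μ.map (fun t (i : Fin k) => t i) = Measure.pi fun _ => ν)
    (hV : MeasurableSet V) (k : ℕ) {A : Set (Fin k → X)} (hA : MeasurableSet A) :
    ∫⁻ φ in proj k ⁻¹' A, G μ k V (proj k φ) ∂μ = μ (V ∩ proj k ⁻¹' A) := by
  have hGmeas := measurable_G (V := V) μ k hV
  -- LHS
  have hL : ∫⁻ φ in proj k ⁻¹' A, G μ k V (proj k φ) ∂μ
      = ∫⁻ p in A, G μ k V p ∂(Measure.pi fun _ : Fin k => ν) := by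
    rw [← lintegral_indicator hA, ← lintegral_indicator (measurable_proj k hA)]

    have : ∀ φ, ((proj k ⁻¹' A).indicator (fun φ => G μ k V (proj k φ))) φ
        = (A.indicator (G μ k V)) (proj k φ) := by
      intro φ
      by_cases h : proj k φ ∈ A
      · rw [Set.indicator_of_mem h]; exact Set.indicator_of_mem h _
      · rw [Set.indicator_of_notMem h]; exact Set.indicator_of_notMem h _
    simp_rw [this]
    exact (measurePreserving_proj ν μ hμ k).lintegral_comp (hGmeas.indicator hA)
  -- RHS
  have hZA : MeasurableSet (slabZ k V ∩ A ×ˢ (Set.univ : Set (ℕ → X))) :=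
    (measurableSet_slabZ k hV).inter (hA.prod MeasurableSet.univ)
  have hR : μ (V ∩ proj k ⁻¹' A)
      = ((Measure.pi fun _ : Fin k => ν).prod μ) (slabZ k V ∩ A ×ˢ Set.univ) := by
    rw [← (measurePreserving_extract ν μ hμ k).measure_preimage hZA.nullMeasurableSet]
    congr 1
    ext φ
    simp only [Set.mem_inter_iff, Set.mem_preimage, extract, Set.mem_prod, Set.mem_univ,
      and_true, slabZ, Set.mem_setOf_eq, splice_proj_tail]
  rw [hL, hR, Measure.prod_apply hZA]
  rw [← lintegral_indicator hA]
  congr 1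
  funext p
  by_cases h : p ∈ A
  · rw [Set.indicator_of_mem h]
    show μ _ = μ _
    congr 1
    ext w
    simp only [Set.mem_setOf_eq, Set.mem_preimage, Set.mem_inter_iff, Set.mem_prod,
      Set.mem_univ, and_true, slabZ]
    exact (and_iff_left h).symm
  · rw [Set.indicator_of_notMem h]
    have : Prod.mk p ⁻¹' (slabZ k V ∩ A ×ˢ (Set.univ : Set (ℕ → X))) = ∅ := by
      ext w; simp [h]
    rw [this, measure_empty]


theorem G_eq_condexp {V : Set (ℕ → X)}
    (hμ : ∀ k : ℕ, μ.map (fun t (i : Fin k) => t i) = Measure.pi fun _ => ν)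
    (hV : MeasurableSet V) (k : ℕ) :
    (fun φ => (G μ k V (proj k φ)).toReal)
      =ᵐ[μ] μ[V.indicator (fun _ => (1 : ℝ)) | (ℱnat (X := X)) k] := by
  have hm : ((ℱnat (X := X)) k : MeasurableSpace (ℕ → X))
      ≤ (MeasurableSpace.pi : MeasurableSpace (ℕ → X)) := (ℱnat (X := X)).le k
  have hGle : ∀ φ : ℕ → X, ‖(G μ k V (proj k φ)).toReal‖ ≤ 1 := by
    intro φ
    rw [Real.norm_of_nonneg ENNReal.toReal_nonneg]
    refine ENNReal.toReal_le_of_le_ofReal zero_le_one ?_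
    rw [ENNReal.ofReal_one]
    exact le_trans (measure_mono (Set.subset_univ _)) (le_of_eq measure_univ)
  have hGm : Measurable (fun φ => (G μ k V (proj k φ)).toReal) :=
    ((measurable_G μ k hV).comp (measurable_proj k)).ennreal_toReal
  have hGint : Integrable (fun φ => (G μ k V (proj k φ)).toReal) μ :=
    (integrable_const (1 : ℝ)).mono' hGm.aestronglyMeasurable (ae_of_all _ hGle)
  refine ae_eq_condExp_of_forall_setIntegral_eq hm
    ((integrable_const (1 : ℝ)).indicator hV) (fun s _ _ => hGint.integrableOn)
    ?_ ?_
  · rintro s hs -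
    obtain ⟨A, hA, rfl⟩ := MeasurableSpace.measurableSet_comap.1 hs
    have hsA : MeasurableSet (proj (X := X) k ⁻¹' A) := measurable_proj k hA
    have hRHS : ∫ φ in proj k ⁻¹' A, V.indicator (fun _ => (1 : ℝ)) φ ∂μ
        = (μ (V ∩ proj k ⁻¹' A)).toReal := by
      rw [setIntegral_indicator hV, setIntegral_const, smul_eq_mul, mul_one, Set.inter_comm, measureReal_def]
    rw [hRHS]
    have hlt : ∀ᵐ φ ∂(μ.restrict (proj k ⁻¹' A)), G μ k V (proj k φ) < ⊤ :=
      ae_of_all _ fun φ => lt_of_le_of_lt (measure_mono (Set.subset_univ _))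
        (measure_lt_top μ _)
    have haem : AEMeasurable (fun φ : ℕ → X => G μ k V (proj k φ))
        (μ.restrict (proj k ⁻¹' A)) :=
      ((measurable_G μ k hV).comp (measurable_proj k)).aemeasurable
    rw [integral_toReal haem hlt, lintegral_G ν μ hμ hV k hA]
  · have hprojm : Measurable[(ℱnat (X := X)) k] (proj (X := X) k) :=
      measurable_iff_comap_le.2 le_rfl
    exact (((measurable_G μ k hV).ennreal_toReal.comp hprojm).stronglyMeasurable).aestronglyMeasurable

theorem tendsto_G_ae {V : Set (ℕ → X)}
    (hμ : ∀ k : ℕ, μ.map (fun t (i : Fin k) => t i) = Measure.pi fun _ => ν)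
    (hV : MeasurableSet V) :
    ∀ᵐ φ ∂μ, Tendsto (fun k => (G μ k V (proj k φ)).toReal) atTop
      (𝓝 (V.indicator (fun _ => (1 : ℝ)) φ)) := by
  have hint : Integrable (V.indicator fun _ => (1 : ℝ)) μ :=
    (integrable_const (1 : ℝ)).indicator hV
  have hsm : StronglyMeasurable[⨆ k, ((ℱnat (X := X)) k : MeasurableSpace (ℕ → X))]
      (V.indicator fun _ => (1 : ℝ)) := by
    rw [iSup_ℱnat]
    exact stronglyMeasurable_const.indicator hV
  have hconv := hint.tendsto_ae_condExp hsm
  have heq : ∀ᵐ φ ∂μ, ∀ k : ℕ, (G μ k V (proj k φ)).toReal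
      = (μ[V.indicator (fun _ => (1 : ℝ)) | (ℱnat (X := X)) k]) φ :=
    ae_all_iff.2 fun k => G_eq_condexp ν μ hμ hV k
  filter_upwards [hconv, heq] with φ h1 h2
  exact h1.congr fun k => (h2 k).symm

def conc (k : ℕ) (p : Fin k → X) (x : X) (s : ℕ → X) : ℕ → X :=
  fun i => if h : i < k then p ⟨i, h⟩ else if i = k then x else s (i - (k + 1))

lemma conc_splice (k : ℕ) (p : Fin k → X) (w : ℕ → X) :
    conc k p (w 0) (tail 1 w) = splice k p w := by
  funext i
  unfold conc splice tail
  rcases lt_trichotomy i k with h | h | h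
  · rw [dif_pos h, dif_pos h]
  · subst h
    rw [dif_neg (lt_irrefl i), dif_neg (lt_irrefl i), if_pos rfl]
    congr 1
    omega
  · have h1 : ¬ i < k := by omega
    have h2 : i ≠ k := by omega
    rw [dif_neg h1, dif_neg h1, if_neg h2]
    congr 1
    omega

lemma measurable_conc_pair (k : ℕ) (p : Fin k → X) :
    Measurable (fun q : (ℕ → X) × X => conc k p q.2 q.1) := by
  apply measurable_pi_lambda
  intro i
  unfold conc
  split_ifs with h1 h2
  · exact measurable_const
  · exact measurable_snd
  · exact (measurable_pi_apply _).comp measurable_fst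

theorem measurePreserving_headTail
    (hμ : ∀ k : ℕ, μ.map (fun t (i : Fin k) => t i) = Measure.pi fun _ => ν) :
    MeasurePreserving (fun w : ℕ → X => (w 0, tail 1 w)) μ (ν.prod μ) := by
  have h1 := measurePreserving_extract ν μ hμ 1
  have h2 : MeasurePreserving
      (Prod.map (MeasurableEquiv.funUnique (Fin 1) X) (id : (ℕ → X) → (ℕ → X)))
      ((Measure.pi fun _ : Fin 1 => ν).prod μ) (ν.prod μ) :=
    (measurePreserving_funUnique ν (Fin 1)).prod (MeasurePreserving.id μ)
  have h3 := h2.comp h1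
  convert h3 using 1
  rfl


theorem main {V : Set (ℕ → X)}
    (hμ : ∀ k : ℕ, μ.map (fun t (i : Fin k) => t i) = Measure.pi fun _ => ν)
    (hV : MeasurableSet V) (hVpos : 0 < μ V)
    (W : Set (ℕ → X) → (ℕ → X) → ℕ → (ℕ → X) → Set (ℕ → X))
    (hW : ∀ Wk u k s, W Wk u k s =
      {φ | φ ∈ Wk ∧ (∀ i : ℕ, i < k → φ i = u i) ∧ ∀ j : ℕ, φ (k + 1 + j) = s j}) :
    ∀ᵐ t ∂μ, t ∈ V → ∀ γ δ : ℝ, 0 < γ → γ < 1 → 0 < δ → δ < 1 →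
      ∃ k₀ : ℕ, ∀ k : ℕ, k₀ ≤ k →
        ∃ Wk : Set (ℕ → X), MeasurableSet Wk ∧ Wk ⊆ V ∧ t ∈ Wk ∧ 0 < μ Wk ∧
          ∀ᵐ u ∂μ, u ∈ Wk → ∃ S : Set (ℕ → X), MeasurableSet S ∧
            ENNReal.ofReal (1 - γ) ≤ μ S ∧
            ∀ s ∈ S, ENNReal.ofReal (1 - δ) ≤ ν ((fun φ => φ k) '' W Wk u k s) := by
  have htend := tendsto_G_ae ν μ hμ hV
  filter_upwards [htend] with t ht htV γ δ hγ0 hγ1 hδ0 hδ1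
  set η : ℝ := γ * δ with hηdef
  have hη0 : 0 < η := mul_pos hγ0 hδ0
  have hη1 : η < 1 := by nlinarith
  -- the sets
  set Wset : ℕ → Set (ℕ → X) :=
    fun k => V ∩ {φ | ENNReal.ofReal (1 - η) < G μ k V (proj k φ)} with hWset
  have hWmeas : ∀ k, MeasurableSet (Wset k) := by
    intro k
    exact hV.inter (measurableSet_lt measurable_const
      ((measurable_G μ k hV).comp (measurable_proj k)))
  set Aset : ℕ → Set (ℕ → X) := fun K => V ∩ ⋂ (j : ℕ), ⋂ (_ : K ≤ j),
      {φ | ENNReal.ofReal (1 - η) < G μ j V (proj j φ)} with hAset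
  have hAsub : ∀ K k, K ≤ k → Aset K ⊆ Wset k := by
    intro K k hKk φ hφ
    exact ⟨hφ.1, by
      have := hφ.2
      simp only [Set.mem_iInter] at this
      exact this k hKk⟩
  -- conversion of eventual inequalities
  have hconv : ∀ φ : ℕ → X, φ ∈ V →
      Tendsto (fun k => (G μ k V (proj k φ)).toReal) atTop
        (𝓝 (V.indicator (fun _ => (1 : ℝ)) φ)) →
      ∃ K : ℕ, ∀ j : ℕ, K ≤ j → ENNReal.ofReal (1 - η) < G μ j V (proj j φ) := by
    intro φ hφV hφ
    rw [Set.indicator_of_mem hφV] at hφ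
    have := hφ.eventually (eventually_gt_nhds (show 1 - η < 1 by linarith))
    obtain ⟨K, hK⟩ := eventually_atTop.1 this
    refine ⟨K, fun j hj => ?_⟩
    exact (ENNReal.ofReal_lt_iff_lt_toReal (by linarith) (G_ne_top μ j _)).2 (hK j hj)
  -- positivity of some Aset
  have hKpos : ∃ K : ℕ, 0 < μ (Aset K) := by
    by_contra hcon
    push_neg at hcon
    have hnull : μ (⋃ K, Aset K) = 0 :=
      measure_iUnion_null fun K => le_antisymm (hcon K) zero_le
    have hle : μ V ≤ μ (⋃ K, Aset K) := by
      refine measure_mono_ae ?_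
      filter_upwards [htend] with φ hφ hφV
      obtain ⟨K, hK⟩ := hconv φ hφV hφ
      exact Set.mem_iUnion.2 ⟨K, hφV, Set.mem_iInter.2 fun j =>
        Set.mem_iInter.2 fun hj => hK j hj⟩
    rw [hnull] at hle
    exact absurd (le_antisymm hle zero_le) (ne_of_gt hVpos)
  obtain ⟨K, hK⟩ := hKpos
  obtain ⟨N, hN⟩ := hconv t htV ht
  refine ⟨max N K, fun k hk => ?_⟩
  refine ⟨Wset k, hWmeas k, Set.inter_subset_left,
    ⟨htV, hN k (le_trans (le_max_left N K) hk)⟩,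
    lt_of_lt_of_le hK (measure_mono (hAsub K k (le_trans (le_max_right N K) hk))), ?_⟩
  refine ae_of_all _ fun u hu => ?_
  obtain ⟨huV, hup⟩ := hu
  set p : Fin k → X := proj k u with hp
  -- the bad set in (ℕ → X) × X  (s, x)
  set Z₃ : Set ((ℕ → X) × X) := {q | conc k p q.2 q.1 ∉ V} with hZ₃def
  have hZ₃ : MeasurableSet Z₃ := (measurable_conc_pair k p) hV.compl
  set F : (ℕ → X) → ℝ≥0∞ := fun s => ν (Prod.mk s ⁻¹' Z₃) with hFdef
  have hFm : Measurable F := measurable_measure_prodMk_left hZ₃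
  set S : Set (ℕ → X) := {s | F s ≤ ENNReal.ofReal δ} with hSdef
  have hSmeas : MeasurableSet S := measurableSet_le hFm measurable_const
  -- the integral bound
  have hsplice : MeasurableSet {w : ℕ → X | splice k p w ∈ V} := by
    have hm : Measurable (fun w : ℕ → X => splice k p w) := by
      apply measurable_pi_lambda
      intro i
      unfold splice
      split_ifs
      · exact measurable_const
      · exact measurable_pi_apply _
    exact hm hV
  have hintF : ∫⁻ s, F s ∂μ ≤ ENNReal.ofReal η := by
    have e1 : ∫⁻ s, F s ∂μ = (μ.prod ν) Z₃ := (Measure.prod_apply hZ₃).symm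
    have e2 : (μ.prod ν) Z₃ = (ν.prod μ) (Prod.swap ⁻¹' Z₃) := by
      rw [← Measure.prod_swap, Measure.map_apply measurable_swap hZ₃]
    have e3 : (ν.prod μ) (Prod.swap ⁻¹' Z₃)
        = μ ((fun w : ℕ → X => (w 0, tail 1 w)) ⁻¹' (Prod.swap ⁻¹' Z₃)) :=
      ((measurePreserving_headTail ν μ hμ).measure_preimage
        ((measurable_swap hZ₃).nullMeasurableSet)).symm
    have e4 : (fun w : ℕ → X => (w 0, tail 1 w)) ⁻¹' (Prod.swap ⁻¹' Z₃)
        = {w : ℕ → X | splice k p w ∈ V}ᶜ := by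
      ext w
      simp only [Set.mem_preimage, Set.mem_compl_iff, Set.mem_setOf_eq, hZ₃def, Prod.swap,
        conc_splice]
    have e5 : μ ({w : ℕ → X | splice k p w ∈ V}ᶜ) ≤ ENNReal.ofReal η := by
      rw [prob_compl_eq_one_sub hsplice]
      have h6 : (1 : ℝ≥0∞) - ENNReal.ofReal (1 - η) = ENNReal.ofReal η := by
        rw [← ENNReal.ofReal_one, ← ENNReal.ofReal_sub 1 (by linarith : (0:ℝ) ≤ 1 - η)]
        norm_num
      rw [← h6]
      exact tsub_le_tsub_left (le_of_lt hup) 1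
    rw [e1, e2, e3, e4]
    exact e5
  -- Markov
  have hScompl : μ Sᶜ ≤ ENNReal.ofReal γ := by
    have h1 : Sᶜ ⊆ {s | ENNReal.ofReal δ ≤ F s} := by
      intro s hs
      exact le_of_lt (lt_of_not_ge (fun h : F s ≤ ENNReal.ofReal δ => hs h))
    refine le_trans (measure_mono h1) ?_
    refine le_trans (meas_ge_le_lintegral_div hFm.aemeasurable
      (by simpa using (ENNReal.ofReal_pos.2 hδ0).ne') ENNReal.ofReal_ne_top) ?_
    refine le_trans (ENNReal.div_le_div_right hintF _) ?_
    refine ENNReal.div_le_of_le_mul ?_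
    rw [hηdef, ENNReal.ofReal_mul (le_of_lt hγ0)]
  have hSbig : ENNReal.ofReal (1 - γ) ≤ μ S := by
    have h1 : μ S = 1 - μ Sᶜ := by
      rw [← prob_compl_eq_one_sub hSmeas.compl, compl_compl]
    rw [h1]
    have h2 : (1 : ℝ≥0∞) - ENNReal.ofReal γ = ENNReal.ofReal (1 - γ) := by
      rw [← ENNReal.ofReal_one, ← ENNReal.ofReal_sub 1 (le_of_lt hγ0)]
    rw [← h2]
    exact tsub_le_tsub_left hScompl 1
  refine ⟨S, hSmeas, hSbig, fun s hs => ?_⟩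
  -- the section estimate
  have hCmeas : MeasurableSet {x : X | conc k p x s ∈ V} := by
    have : Measurable (fun x : X => conc k p x s) := by
      apply measurable_pi_lambda
      intro i
      unfold conc
      split_ifs with h1 h2
      · exact measurable_const
      · exact measurable_id
      · exact measurable_const
    exact this hV
  have hCbig : ENNReal.ofReal (1 - δ) ≤ ν {x : X | conc k p x s ∈ V} := by
    have h1 : ν ({x : X | conc k p x s ∈ V}ᶜ) = F s := rfl
    have h2 : ν {x : X | conc k p x s ∈ V} = 1 - ν ({x : X | conc k p x s ∈ V}ᶜ) := by
      rw [← prob_compl_eq_one_sub hCmeas.compl, compl_compl]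
    rw [h2, h1]
    have h3 : (1 : ℝ≥0∞) - ENNReal.ofReal δ = ENNReal.ofReal (1 - δ) := by
      rw [← ENNReal.ofReal_one, ← ENNReal.ofReal_sub 1 (le_of_lt hδ0)]
    rw [← h3]
    exact tsub_le_tsub_left hs 1
  refine le_trans hCbig (measure_mono ?_)
  intro x hx
  refine ⟨conc k p x s, ?_, ?_⟩
  · rw [hW]
    refine ⟨⟨hx, ?_⟩, ?_, ?_⟩
    · show ENNReal.ofReal (1 - η) < G μ k V (proj k (conc k p x s))
      have : proj k (conc k p x s) = p := by
        funext i
        show conc k p x s i = p i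
        unfold conc
        rw [dif_pos i.2]
      rw [this]
      exact hup
    · intro i hi
      show conc k p x s i = u i
      unfold conc
      rw [dif_pos hi]
      rfl
    · intro j
      show conc k p x s (k + 1 + j) = s j
      unfold conc
      rw [dif_neg (by omega), if_neg (by omega)]
      congr 1
      omega
  · show conc k p x s k = x
    unfold conc
    rw [dif_neg (lt_irrefl k), if_pos rfl]

end Statement2Aux

/-- The double section `W(u,k,s)` of `W ⊆ Δ` through `u` and `s` at `k`:
sequences in `W` which agree with `u` on the first `k` coordinates and whose tail
from position `k+2` (1-indexed) onwards is `s`.  (Coordinates are indexed from `0`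
here, so the free coordinate is the one of index `k`.) -/
def doubleSection {T : Type*} (W : Set (ℕ → T)) (u : ℕ → T) (k : ℕ) (s : ℕ → T) :
    Set (ℕ → T) :=
  {φ | φ ∈ W ∧ (∀ i : ℕ, i < k → φ i = u i) ∧ ∀ j : ℕ, φ (k + 1 + j) = s j}

/-- For Borel `V ⊆ Δ` with `ν^∞(V) > 0`, for `ν^∞`-a.e. `t ∈ V` and all
`γ, δ ∈ (0,1)` there is `k₀` such that for all `k ≥ k₀` there is a Borel `W_k ⊆ V` with
`t ∈ W_k`, `ν^∞(W_k) > 0`, and for `ν^∞`-a.e. `u ∈ W_k` there is a Borel `S ⊆ Δ` with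
`ν^∞(S) ≥ 1 − γ` such that `ν(p_{k+1}(W_k(u,k,s))) ≥ 1 − δ` for every `s ∈ S`. -/
theorem statement2
    (n : ℕ) (hn : 1 ≤ n) (a : EuclideanSpace ℝ (Fin n)) (ε : ℝ) (hε : 0 < ε)
    (ν : Measure (Metric.closedBall a ε))
    (hν : ν = (volume (Metric.closedBall a ε))⁻¹ •
      ((volume : Measure (EuclideanSpace ℝ (Fin n))).comap Subtype.val))
    (νinf : Measure (ℕ → (Metric.closedBall a ε : Set (EuclideanSpace ℝ (Fin n)))))
    (hprob : IsProbabilityMeasure νinf)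
    (hνinf : ∀ k : ℕ, νinf.map (fun t (i : Fin k) => t i) = Measure.pi fun _ => ν)
    (V : Set (ℕ → (Metric.closedBall a ε : Set (EuclideanSpace ℝ (Fin n)))))
    (hV : MeasurableSet V) (hVpos : 0 < νinf V) :
    ∀ᵐ t ∂νinf, t ∈ V → ∀ γ δ : ℝ, 0 < γ → γ < 1 → 0 < δ → δ < 1 →
      ∃ k₀ : ℕ, ∀ k : ℕ, k₀ ≤ k →
        ∃ Wk : Set (ℕ → (Metric.closedBall a ε : Set (EuclideanSpace ℝ (Fin n)))),
          MeasurableSet Wk ∧ Wk ⊆ V ∧ t ∈ Wk ∧ 0 < νinf Wk ∧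
          ∀ᵐ u ∂νinf, u ∈ Wk →
            ∃ S : Set (ℕ → (Metric.closedBall a ε : Set (EuclideanSpace ℝ (Fin n)))),
              MeasurableSet S ∧ ENNReal.ofReal (1 - γ) ≤ νinf S ∧
              ∀ s ∈ S, ENNReal.ofReal (1 - δ) ≤ ν ((fun φ => φ k) '' doubleSection Wk u k s) := by
  haveI hprobν : IsProbabilityMeasure ν := by
    constructor
    have hBmeas : MeasurableSet (Metric.closedBall a ε) := measurableSet_closedBall
    have hemb : MeasurableEmbedding (Subtype.val :
        ↥(Metric.closedBall a ε) → EuclideanSpace ℝ (Fin n)) :=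
      MeasurableEmbedding.subtype_coe hBmeas
    rw [hν]
    simp only [Measure.smul_apply, smul_eq_mul]
    rw [hemb.comap_apply, Set.image_univ, Subtype.range_coe]
    refine ENNReal.inv_mul_cancel ?_ ?_
    · exact (Metric.measure_closedBall_pos volume a hε).ne'
    · exact (measure_closedBall_lt_top).ne
  exact Statement2Aux.main ν νinf hνinf hV hVpos doubleSection (fun _ _ _ _ => rfl)


end
end
end

section
/- Assume the setting. Let U ⊆ M, let A₀,…,A_{l−1} be open subsets of M with pairwise disjoint closures, and let V ⊆ Δ be a Borel set with ν^∞(V) > 0 such that f^k(U,V) ⊆ A_{k mod l} for every k ≥ 1. Then for ν^∞-almost every t ∈ V: ω(U,t) ⊆ closure(A₀) ∪ ⋯ ∪ closure(A_{l−1}), and whenever z ∈ ω(U,t) ∩ closure(A_i) for some 0 ≤ i ≤ l−1, one has f^k(z,ψ) ∈ closure(A_{(i+k) mod l}) for every k ≥ 1 and every ψ ∈ Δ. -/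
open MeasureTheory Metric Set Filter Topology

noncomputable section

/-- The parameter space `T`: the closed `ε`-ball around `a` in `ℝⁿ`. -/
abbrev PSpace (n : ℕ) (a : EuclideanSpace ℝ (Fin n)) (ε : ℝ) : Type _ :=
  ↥(Metric.closedBall a ε)

/-- Perturbed iterates: `pIter f k z t = f_{t_k} ∘ ⋯ ∘ f_{t_1} (z)`
(the sequence `t` is indexed from `0` here). -/
def pIter {M T : Type*} (f : M → T → M) : ℕ → M → (ℕ → T) → M
  | 0, z, _ => z
  | k + 1, z, t => f (pIter f k z t) (t k)

/-- An s-invariant domain for the randomly perturbed system: a finite tuple of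
nonempty open sets with pairwise disjoint closures, permuted cyclically by all
perturbed iterates. -/
structure SInvDomain {M T : Type*} [TopologicalSpace M] (f : M → T → M) where
  r : ℕ
  r_pos : 0 < r
  U : Fin r → Set M
  isOpen : ∀ i, IsOpen (U i)
  nonempty : ∀ i, (U i).Nonempty
  separated : ∀ i j : Fin r, i ≠ j → closure (U i) ∩ closure (U j) = ∅
  invariant : ∀ k : ℕ, 1 ≤ k → ∀ i : Fin r, ∀ z ∈ U i, ∀ t : ℕ → T,
    pIter f k z t ∈ U ⟨((i : ℕ) + k) % r, Nat.mod_lt _ r_pos⟩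

/-- The union `⋃D` of the open sets forming an s-invariant domain. -/
def SInvDomain.carrier {M T : Type*} [TopologicalSpace M] {f : M → T → M}
    (D : SInvDomain f) : Set M := ⋃ i, D.U i

/-- The partial order `D ⪯ D'` on s-invariant domains. -/
def DomLE {M T : Type*} [TopologicalSpace M] {f : M → T → M}
    (D D' : SInvDomain f) : Prop :=
  ∃ i i' : ℕ, ∀ k : ℕ, 1 ≤ k →
    D.U ⟨(i + k) % D.r, Nat.mod_lt _ D.r_pos⟩ ⊆ D'.U ⟨(i' + k) % D'.r, Nat.mod_lt _ D'.r_pos⟩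

/-- Two s-invariant domains coincide up to cyclic shift. -/
def CyclicEq {M T : Type*} [TopologicalSpace M] {f : M → T → M}
    (D D' : SInvDomain f) : Prop :=
  ∃ i i' : ℕ, ∀ k : ℕ, 1 ≤ k →
    D.U ⟨(i + k) % D.r, Nat.mod_lt _ D.r_pos⟩ = D'.U ⟨(i' + k) % D'.r, Nat.mod_lt _ D'.r_pos⟩

/-- A minimal invariant domain. -/
def MinimalDom {M T : Type*} [TopologicalSpace M] {f : M → T → M}
    (D : SInvDomain f) : Prop :=
  ∀ D' : SInvDomain f, DomLE D' D → CyclicEq D' D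

/-- A c-invariant (completely invariant) set. -/
def CInvariant {M T : Type*} (f : M → T → M) (C : Set M) : Prop :=
  ∀ x ∈ C, ∀ t : ℕ → T, ∀ k : ℕ, 1 ≤ k → pIter f k x t ∈ C

/-- The ω-limit of a point under a fixed perturbation vector. -/
def omegaPt {M T : Type*} [TopologicalSpace M] (f : M → T → M) (z : M) (t : ℕ → T) : Set M :=
  {w | ∃ nseq : ℕ → ℕ, StrictMono nseq ∧
    Tendsto (fun j => pIter f (nseq j) z t) atTop (𝓝 w)}

/-- The ω-limit of a set under a fixed perturbation vector. -/
def omegaSet {M T : Type*} [TopologicalSpace M] (f : M → T → M) (U : Set M) (t : ℕ → T) :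
    Set M :=
  {w | ∃ (u : ℕ → M) (nseq : ℕ → ℕ), (∀ j, u j ∈ U) ∧ StrictMono nseq ∧
    Tendsto (fun j => pIter f (nseq j) (u j) t) atTop (𝓝 w)}

/-- The ω-limit of a set under all perturbation vectors. -/
def omegaSetAll {M T : Type*} [TopologicalSpace M] (f : M → T → M) (U : Set M) : Set M :=
  {w | ∃ (u : ℕ → M) (ts : ℕ → ℕ → T) (nseq : ℕ → ℕ), (∀ j, u j ∈ U) ∧ StrictMono nseq ∧
    Tendsto (fun j => pIter f (nseq j) (u j) (ts j)) atTop (𝓝 w)}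

/-- A stationary probability measure for the perturbed system. -/
def Stationary {M T : Type*} [TopologicalSpace M] [MeasurableSpace M] [MeasurableSpace T]
    (f : M → T → M) (ν : Measure T) (μ : Measure M) : Prop :=
  ∀ φ : C(M, ℝ), ∫ z, (∫ t, φ (f z t) ∂ν) ∂μ = ∫ z, φ z ∂μ

/-- The skew product map `S(z,t) = (f_{t₁}(z), σ t)`. -/
def skewProd {M T : Type*} (f : M → T → M) : M × (ℕ → T) → M × (ℕ → T) :=
  fun p => (f p.1 (p.2 0), fun i => p.2 (i + 1))

/-- The support of a measure: points all of whose open neighbourhoods have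
positive measure. -/
def msupport {M : Type*} [TopologicalSpace M] [MeasurableSpace M] (μ : Measure M) : Set M :=
  {x | ∀ O : Set M, IsOpen O → x ∈ O → 0 < μ O}

/-- The ergodic basin `E(μ)` of a stationary measure: points whose time averages along
`ν^∞`-a.e. perturbed orbit converge to the space average of every continuous function. -/
def basin {M T : Type*} [TopologicalSpace M] [MeasurableSpace M] [MeasurableSpace T]
    (f : M → T → M) (νinf : Measure (ℕ → T)) (μ : Measure M) : Set M :=
  {x | ∀ᵐ t ∂νinf, ∀ φ : C(M, ℝ),
    Tendsto (fun nn : ℕ => (nn : ℝ)⁻¹ * ∑ j ∈ Finset.range nn, φ (pIter f j x t))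
      atTop (𝓝 (∫ z, φ z ∂μ))}

section Statement3Aux
set_option linter.unusedSectionVars false


theorem pIter_congr {M T : Type*} (f : M → T → M) (k : ℕ) (z : M) {t t' : ℕ → T}
    (h : ∀ i < k, t i = t' i) : pIter f k z t = pIter f k z t' := by
  induction k with
  | zero => rfl
  | succ k ih =>
      simp only [pIter, ih fun i hi => h i (hi.trans k.lt_succ_self),
        h k k.lt_succ_self]

theorem pIter_add {M T : Type*} (f : M → T → M) (m k : ℕ) (z : M) (t : ℕ → T) :
    pIter f (m + k) z t = pIter f k (pIter f m z t) (fun i => t (m + i)) := by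
  induction k with
  | zero => rfl
  | succ k ih =>
      show f (pIter f (m + k) z t) (t (m + k)) = _
      rw [ih]; rfl

theorem pIter_continuous {M T : Type*} [TopologicalSpace M] [TopologicalSpace T]
    {f : M → T → M} (hf : Continuous fun p : M × T => f p.1 p.2) (k : ℕ) :
    Continuous fun p : M × (ℕ → T) => pIter f k p.1 p.2 := by
  induction k with
  | zero => exact continuous_fst
  | succ k ih =>
      exact hf.comp (ih.prodMk ((continuous_apply k).comp continuous_snd))

def restrN (T : Type*) (N : ℕ) : (ℕ → T) → (Fin N → T) := fun t i => t i

def eMap (T : Type*) (N : ℕ) : (ℕ → T) → (Fin N → T) × (ℕ → T) :=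
  fun t => (restrN T N t, fun i => t (N + i))

def appMap (T : Type*) (N : ℕ) : (Fin N → T) × (ℕ → T) → (ℕ → T) :=
  fun p i => if h : i < N then p.1 ⟨i, h⟩ else p.2 (i - N)

variable {T : Type*} [mT : MeasurableSpace T]

theorem measurable_restrN (N : ℕ) : Measurable (restrN T N) :=
  measurable_pi_lambda _ fun _ => measurable_pi_apply _

theorem measurable_eMap (N : ℕ) : Measurable (eMap T N) :=
  (measurable_restrN N).prodMk (measurable_pi_lambda _ fun _ => measurable_pi_apply _)

theorem measurable_appMap (N : ℕ) : Measurable (appMap T N) := by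
  refine measurable_pi_lambda _ fun i => ?_
  by_cases h : i < N
  · simp only [appMap, dif_pos h]
    exact (measurable_pi_apply _).comp measurable_fst
  · simp only [appMap, dif_neg h]
    exact (measurable_pi_apply _).comp measurable_snd

theorem appMap_eMap (N : ℕ) (t : ℕ → T) : appMap T N (eMap T N t) = t := by
  funext i
  by_cases h : i < N
  · simp only [appMap, eMap, dif_pos h]; rfl
  · simp only [appMap, eMap, dif_neg h]
    congr 1
    omega

theorem eMap_appMap (N : ℕ) (p : (Fin N → T) × (ℕ → T)) : eMap T N (appMap T N p) = p := by
  refine Prod.ext (funext fun i => ?_) (funext fun i => ?_)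
  · simp only [eMap, restrN, appMap, dif_pos i.isLt]
  · have h : ¬(N + i < N) := by omega
    simp only [eMap, appMap, dif_neg h]
    show p.2 (N + ↑i - N) = p.2 ↑i
    rw [Nat.add_sub_cancel_left]

def cylSA (T : Type*) [MeasurableSpace T] (N : ℕ) : MeasurableSpace (ℕ → T) :=
  MeasurableSpace.comap (restrN T N) MeasurableSpace.pi

theorem cylSA_le (N : ℕ) : cylSA T N ≤ (MeasurableSpace.pi : MeasurableSpace (ℕ → T)) :=
  (measurable_restrN N).comap_le

theorem measurable_restrN_cylSA (N : ℕ) :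
    @Measurable _ _ (cylSA T N) _ (restrN T N) := fun s hs => ⟨s, hs, rfl⟩

theorem cylSA_mono : Monotone (cylSA T) := by
  intro nn mm h
  have hcomp : restrN T nn = (fun v : Fin mm → T => fun i : Fin nn => v (Fin.castLE h i)) ∘
      restrN T mm := rfl
  rw [cylSA, hcomp, ← MeasurableSpace.comap_comp]
  exact MeasurableSpace.comap_mono
    ((measurable_pi_lambda _ fun i => measurable_pi_apply _).comap_le)

theorem iSup_cylSA : (⨆ N, cylSA T N) = (MeasurableSpace.pi : MeasurableSpace (ℕ → T)) := by
  refine le_antisymm (iSup_le fun N => cylSA_le N) ?_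
  rw [MeasurableSpace.pi]
  refine iSup_le fun i => ?_
  have hcomp : (fun t : ℕ → T => t i) =
      (fun v : Fin (i + 1) → T => v ⟨i, i.lt_succ_self⟩) ∘ restrN T (i + 1) := rfl
  rw [hcomp, ← MeasurableSpace.comap_comp]
  exact le_trans (MeasurableSpace.comap_mono (measurable_pi_apply _).comap_le)
    (le_iSup (cylSA T) (i + 1))

def cylSet (T : Type*) [MeasurableSpace T] : Set (Set (ℕ → T)) :=
  {C | ∃ N S, MeasurableSet S ∧ C = restrN T N ⁻¹' S}

theorem univ_mem_cylSet : (univ : Set (ℕ → T)) ∈ cylSet T :=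
  ⟨0, univ, MeasurableSet.univ, rfl⟩

theorem cylSet_up {N mm : ℕ} (h : N ≤ mm) {S : Set (Fin N → T)} :
    restrN T N ⁻¹' S =
      restrN T mm ⁻¹' ((fun v : Fin mm → T => fun i : Fin N => v (Fin.castLE h i)) ⁻¹' S) := rfl

theorem isPiSystem_cylSet : IsPiSystem (cylSet T) := by
  rintro C ⟨N, S, hS, rfl⟩ C' ⟨N', S', hS', rfl⟩ -
  rcases le_total N N' with h | h
  · refine ⟨N', (fun v : Fin N' → T => fun i : Fin N => v (Fin.castLE h i)) ⁻¹' S ∩ S',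
      (hS.preimage (measurable_pi_lambda _ fun i => measurable_pi_apply _)).inter hS', ?_⟩
    rw [Set.preimage_inter, ← cylSet_up h]
  · refine ⟨N, S ∩ (fun v : Fin N → T => fun i : Fin N' => v (Fin.castLE h i)) ⁻¹' S',
      hS.inter (hS'.preimage (measurable_pi_lambda _ fun i => measurable_pi_apply _)), ?_⟩
    rw [Set.preimage_inter, ← cylSet_up h]

theorem generateFrom_cylSet :
    MeasurableSpace.generateFrom (cylSet T) = (MeasurableSpace.pi : MeasurableSpace (ℕ → T)) := by
  refine le_antisymm (MeasurableSpace.generateFrom_le ?_) ?_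
  · rintro C ⟨N, S, hS, rfl⟩
    exact measurable_restrN N hS
  · rw [← iSup_cylSA]
    refine iSup_le fun N => ?_
    rintro C ⟨S, hS, rfl⟩
    exact MeasurableSpace.measurableSet_generateFrom ⟨N, S, hS, rfl⟩

theorem eMap_preimage_prod (N m : ℕ) (s : Set (Fin N → T)) (S' : Set (Fin m → T)) :
    eMap T N ⁻¹' (s ×ˢ (restrN T m ⁻¹' S')) =
      restrN T (N + m) ⁻¹'
        ((fun v : Fin (N + m) → T =>
          ((fun i : Fin N => v (Fin.castAdd m i)), (fun i : Fin m => v (Fin.natAdd N i))))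
          ⁻¹' (s ×ˢ S')) := rfl

theorem measurePreserving_splitFin (ν : Measure T) [IsProbabilityMeasure ν] (N m : ℕ) :
    MeasurePreserving
      (fun v : Fin (N + m) → T =>
        ((fun i : Fin N => v (Fin.castAdd m i)), (fun i : Fin m => v (Fin.natAdd N i))))
      (Measure.pi fun _ : Fin (N + m) => ν)
      ((Measure.pi fun _ : Fin N => ν).prod (Measure.pi fun _ : Fin m => ν)) := by
  have h1 := (MeasureTheory.measurePreserving_piCongrLeft (fun _ : Fin (N + m) => ν)
    finSumFinEquiv).symm _
  have h2 := MeasureTheory.measurePreserving_sumPiEquivProdPi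
    (fun _ : Fin N ⊕ Fin m => (ν : Measure T))
  exact h2.comp h1

theorem map_eMap_eq (ν : Measure T) [IsProbabilityMeasure ν] (P : Measure (ℕ → T))
    [IsProbabilityMeasure P]
    (hmarg : ∀ N, P.map (restrN T N) = Measure.pi fun _ : Fin N => ν) (N : ℕ) :
    P.map (eMap T N) = (Measure.pi fun _ : Fin N => ν).prod P := by
  refine (Measure.prod_eq_generateFrom MeasurableSpace.generateFrom_measurableSet
    generateFrom_cylSet MeasurableSpace.isPiSystem_measurableSet isPiSystem_cylSet
    (Measure.toFiniteSpanningSetsIn _)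
    ⟨fun _ => univ, fun _ => univ_mem_cylSet, fun _ => measure_lt_top P _,
      Set.iUnion_const _⟩ ?_).symm
  rintro s hs' C ⟨m, S', hS', rfl⟩
  have hs : MeasurableSet s := hs'
  have hsplit := measurePreserving_splitFin ν N m
  have hQ : MeasurableSet
      ((fun v : Fin (N + m) → T =>
        ((fun i : Fin N => v (Fin.castAdd m i)), (fun i : Fin m => v (Fin.natAdd N i))))
        ⁻¹' (s ×ˢ S')) := hsplit.measurable (hs.prod hS')
  rw [Measure.map_apply (measurable_eMap N) (hs.prod (measurable_restrN m hS')),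
    eMap_preimage_prod, ← Measure.map_apply (measurable_restrN (N + m)) hQ, hmarg (N + m),
    hsplit.measure_preimage (hs.prod hS').nullMeasurableSet, Measure.prod_prod,
    ← Measure.map_apply (measurable_restrN m) hS', hmarg m]

theorem setLIntegral_cond_key (ν : Measure T) [IsProbabilityMeasure ν] (P : Measure (ℕ → T))
    [IsProbabilityMeasure P]
    (hmarg : ∀ N, P.map (restrN T N) = Measure.pi fun _ : Fin N => ν)
    {V : Set (ℕ → T)} (hV : MeasurableSet V) (N : ℕ)
    {S : Set (Fin N → T)} (hS : MeasurableSet S) :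
    ∫⁻ t in restrN T N ⁻¹' S, P (Prod.mk (restrN T N t) ⁻¹' (appMap T N ⁻¹' V)) ∂P =
      P (V ∩ restrN T N ⁻¹' S) := by
  have hW : MeasurableSet (appMap T N ⁻¹' V) := measurable_appMap N hV
  have hGmeas : Measurable fun v : Fin N → T => P (Prod.mk v ⁻¹' (appMap T N ⁻¹' V)) :=
    measurable_measure_prodMk_left hW
  rw [← setLIntegral_map hS hGmeas (measurable_restrN N), hmarg N]
  have h1 : ∀ v : Fin N → T,
      S.indicator (fun v => P (Prod.mk v ⁻¹' (appMap T N ⁻¹' V))) v =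
      P (Prod.mk v ⁻¹' ((appMap T N ⁻¹' V) ∩ S ×ˢ univ)) := by
    intro v
    by_cases hv : v ∈ S
    · rw [Set.indicator_of_mem hv]
      congr 1
      ext s
      simp [hv]
    · rw [Set.indicator_of_notMem hv]
      have : Prod.mk v ⁻¹' ((appMap T N ⁻¹' V) ∩ S ×ˢ univ) = ∅ := by
        ext s; simp [hv]
      simp [this]
  rw [← lintegral_indicator hS, lintegral_congr h1,
    ← Measure.prod_apply (hW.inter (hS.prod MeasurableSet.univ)),
    ← map_eMap_eq ν P hmarg N,
    Measure.map_apply (measurable_eMap N) (hW.inter (hS.prod MeasurableSet.univ))]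
  congr 1
  ext t
  simp only [Set.mem_preimage, Set.mem_inter_iff, Set.mem_prod, Set.mem_univ, and_true,
    appMap_eMap]
  rfl

theorem cond_eq_condexp (ν : Measure T) [IsProbabilityMeasure ν] (P : Measure (ℕ → T))
    [IsProbabilityMeasure P]
    (hmarg : ∀ N, P.map (restrN T N) = Measure.pi fun _ : Fin N => ν)
    {V : Set (ℕ → T)} (hV : MeasurableSet V) (N : ℕ) :
    (fun t => (P (Prod.mk (restrN T N t) ⁻¹' (appMap T N ⁻¹' V))).toReal) =ᵐ[P]
      P[V.indicator (fun _ => (1 : ℝ)) | cylSA T N] := by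
  have hW : MeasurableSet (appMap T N ⁻¹' V) := measurable_appMap N hV
  have hGmeas : Measurable fun v : Fin N → T => P (Prod.mk v ⁻¹' (appMap T N ⁻¹' V)) :=
    measurable_measure_prodMk_left hW
  have hGle : ∀ v : Fin N → T, P (Prod.mk v ⁻¹' (appMap T N ⁻¹' V)) ≤ 1 := fun v =>
    le_trans (measure_mono (Set.subset_univ _)) measure_univ.le
  have hmeas : Measurable fun t =>
      (P (Prod.mk (restrN T N t) ⁻¹' (appMap T N ⁻¹' V))).toReal :=
    (hGmeas.comp (measurable_restrN N)).ennreal_toReal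
  have hint : Integrable (fun t =>
      (P (Prod.mk (restrN T N t) ⁻¹' (appMap T N ⁻¹' V))).toReal) P := by
    refine (integrable_const (1 : ℝ)).mono' hmeas.aestronglyMeasurable (ae_of_all _ fun t => ?_)
    rw [Real.norm_eq_abs, abs_of_nonneg ENNReal.toReal_nonneg]
    exact le_trans (ENNReal.toReal_mono ENNReal.one_ne_top (hGle _)) (by norm_num)
  refine ae_eq_condExp_of_forall_setIntegral_eq (cylSA_le N)
    ((integrable_const (1 : ℝ)).indicator hV) (fun s _ _ => hint.integrableOn)
    (fun s hs hμs => ?_) ?_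
  · obtain ⟨S, hS, rfl⟩ := hs
    have hane : ∀ᵐ t ∂(P.restrict (restrN T N ⁻¹' S)),
        P (Prod.mk (restrN T N t) ⁻¹' (appMap T N ⁻¹' V)) < ⊤ :=
      ae_of_all _ fun t => lt_of_le_of_lt (hGle _) ENNReal.one_lt_top
    have := integral_toReal ((hGmeas.comp (measurable_restrN N)).aemeasurable
      (μ := P.restrict (restrN T N ⁻¹' S))) hane
    simp only [Function.comp] at this
    rw [this, setLIntegral_cond_key ν P hmarg hV N hS]
    rw [setIntegral_indicator hV]
    simp only [integral_const, smul_eq_mul, mul_one]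
    rw [measureReal_restrict_apply_univ, Set.inter_comm]; rfl
  · exact StronglyMeasurable.aestronglyMeasurable
      ((hGmeas.ennreal_toReal.comp (measurable_restrN_cylSA N)).stronglyMeasurable)

def cylFiltration (T : Type*) [MeasurableSpace T] :
    Filtration ℕ (MeasurableSpace.pi : MeasurableSpace (ℕ → T)) :=
  ⟨cylSA T, cylSA_mono, cylSA_le⟩

theorem levy_product (ν : Measure T) [IsProbabilityMeasure ν] (P : Measure (ℕ → T))
    [IsProbabilityMeasure P]
    (hmarg : ∀ N, P.map (restrN T N) = Measure.pi fun _ : Fin N => ν)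
    {V : Set (ℕ → T)} (hV : MeasurableSet V) :
    ∀ᵐ t ∂P, t ∈ V →
      Tendsto (fun N => (P {s | appMap T N (restrN T N t, s) ∈ V}).toReal) atTop (𝓝 1) := by
  have hsupeq : (⨆ N, cylFiltration T N) = (MeasurableSpace.pi : MeasurableSpace (ℕ → T)) :=
    iSup_cylSA
  have hVsup : MeasurableSet[⨆ N, cylFiltration T N] V := by rw [hsupeq]; exact hV
  have hmeas : StronglyMeasurable[⨆ N, cylFiltration T N] (V.indicator (fun _ => (1 : ℝ))) :=
    (stronglyMeasurable_const.indicator hVsup)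
  have hint : Integrable (V.indicator (fun _ => (1 : ℝ))) P :=
    (integrable_const (1 : ℝ)).indicator hV
  have hlevy := hint.tendsto_ae_condExp hmeas
  have hae : ∀ᵐ t ∂P, ∀ N, (P[V.indicator (fun _ => (1 : ℝ)) | cylFiltration T N]) t =
      (P (Prod.mk (restrN T N t) ⁻¹' (appMap T N ⁻¹' V))).toReal := by
    rw [ae_all_iff]
    intro N
    exact (cond_eq_condexp ν P hmarg hV N).symm
  filter_upwards [hlevy, hae] with t ht hteq htV
  have h1 : V.indicator (fun _ => (1 : ℝ)) t = 1 := Set.indicator_of_mem htV _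
  rw [h1] at ht
  have : (fun N => (P {s | appMap T N (restrN T N t, s) ∈ V}).toReal) =
      fun N => (P[V.indicator (fun _ => (1 : ℝ)) | cylFiltration T N]) t := by
    funext N
    rw [hteq N]
    rfl
  rw [this]
  exact ht

end Statement3Aux

/-- If the perturbed orbits of `U` under perturbations in `V` pass
cyclically through the pairwise separated open sets `A₀,…,A_{l−1}`, then for
`ν^∞`-a.e. `t ∈ V` the ω-limit `ω(U,t)` lies in the union of the closures, and points of
`ω(U,t) ∩ closure(A_i)` are carried cyclically through the closures by every perturbation. -/
theorem statement3
    (n : ℕ) (hn : 1 ≤ n) (a : EuclideanSpace ℝ (Fin n)) (ε : ℝ) (hε : 0 < ε)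
    (a₀ : PSpace n a ε) (ha₀ : (a₀ : EuclideanSpace ℝ (Fin n)) = a)
    (ν : Measure (PSpace n a ε))
    (hν : ν = (volume (Metric.closedBall a ε))⁻¹ •
      ((volume : Measure (EuclideanSpace ℝ (Fin n))).comap Subtype.val))
    (νinf : Measure (ℕ → PSpace n a ε)) (hprobν : IsProbabilityMeasure νinf)
    (hνinf : ∀ k : ℕ, νinf.map (fun t (i : Fin k) => t i) = Measure.pi fun _ => ν)
    (M : Type*) [MetricSpace M] [CompactSpace M] [MeasurableSpace M] [BorelSpace M]
    (m : Measure M) (hmprob : IsProbabilityMeasure m)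
    (hmpos : ∀ O : Set M, IsOpen O → O.Nonempty → 0 < m O)
    (f : M → PSpace n a ε → M)
    (hfc : Continuous fun p : M × PSpace n a ε => f p.1 p.2)
    (hfh : ∀ t : PSpace n a ε, IsHomeomorph fun z : M => f z t)
    (hfnull : ∀ (t : PSpace n a ε) (A : Set M), m A = 0 →
      m ((fun z => f z t) '' A) = 0 ∧ m ((fun z => f z t) ⁻¹' A) = 0)
    (l : ℕ) (hl : 0 < l) (A : Fin l → Set M)
    (hAopen : ∀ i, IsOpen (A i))
    (hAsep : ∀ i j : Fin l, i ≠ j → closure (A i) ∩ closure (A j) = ∅)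
    (U : Set M)
    (V : Set (ℕ → PSpace n a ε)) (hVmeas : MeasurableSet V) (hVpos : 0 < νinf V)
    (hUV : ∀ k : ℕ, 1 ≤ k → ∀ z ∈ U, ∀ t ∈ V,
      pIter f k z t ∈ A ⟨k % l, Nat.mod_lt _ hl⟩) :
    ∀ᵐ t ∂νinf, t ∈ V →
      (omegaSet f U t ⊆ ⋃ i, closure (A i)) ∧
      ∀ i : Fin l, ∀ z ∈ omegaSet f U t, z ∈ closure (A i) →
        ∀ k : ℕ, 1 ≤ k → ∀ ψ : ℕ → PSpace n a ε,
          pIter f k z ψ ∈ closure (A ⟨((i : ℕ) + k) % l, Nat.mod_lt _ hl⟩) := by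
  haveI := hprobν
  -- `ν` is a probability measure
  have hBmeas : MeasurableSet (Metric.closedBall a ε) := measurableSet_closedBall
  have hcomap : ∀ O : Set (PSpace n a ε), (volume.comap Subtype.val) O = volume (Subtype.val '' O) :=
    fun O => (MeasurableEmbedding.subtype_coe hBmeas).comap_apply _ O
  have hvolB_pos : 0 < volume (Metric.closedBall a ε) := measure_closedBall_pos volume a hε
  have hvolB_lt : volume (Metric.closedBall a ε) < ⊤ := measure_closedBall_lt_top
  haveI hνprob : IsProbabilityMeasure ν := by
    constructor
    rw [hν]
    simp only [Measure.smul_apply, smul_eq_mul]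
    rw [hcomap univ, Set.image_univ, Subtype.range_coe]
    exact ENNReal.inv_mul_cancel hvolB_pos.ne' hvolB_lt.ne
  have hmarg : ∀ N, νinf.map (restrN (PSpace n a ε) N) = Measure.pi fun _ : Fin N => ν := fun N => hνinf N
  -- positivity of `ν` on nonempty open sets
  have hν_pos : ∀ O : Set (PSpace n a ε), IsOpen O → O.Nonempty → 0 < ν O := by
    rintro O hO ⟨x, hx⟩
    obtain ⟨O', hO', rfl⟩ := isOpen_induced_iff.mp hO
    have hball : (O' ∩ Metric.ball a ε).Nonempty := by
      have hxcl : (x : EuclideanSpace ℝ (Fin n)) ∈ closure (Metric.ball a ε) := by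
        rw [closure_ball a hε.ne']
        exact x.2
      exact _root_.mem_closure_iff.mp hxcl O' hO' hx
    have hpos : 0 < volume (O' ∩ Metric.ball a ε) :=
      (hO'.inter isOpen_ball).measure_pos volume hball
    rw [hν]
    simp only [Measure.smul_apply, smul_eq_mul]
    refine ENNReal.mul_pos (by simp [hvolB_lt.ne]) ?_
    rw [hcomap, Subtype.image_preimage_coe]
    exact (lt_of_lt_of_le hpos (measure_mono (by
      exact Set.inter_subset_inter_right O' Metric.ball_subset_closedBall |>.trans
        (le_of_eq (Set.inter_comm _ _))))).ne'
  -- full support of `νinf`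
  have hsupp : ∀ O : Set (ℕ → (PSpace n a ε)), IsOpen O → O.Nonempty → 0 < νinf O := by
    rintro O hO ⟨ψ, hψ⟩
    obtain ⟨I, u, hu, hsub⟩ := isOpen_pi_iff.mp hO ψ hψ
    set N := I.sup id + 1 with hN
    have hIN : ∀ b ∈ I, b < N := fun b hb =>
      Nat.lt_succ_of_le (Finset.le_sup (f := id) hb)
    set w : Fin N → Set (PSpace n a ε) := fun i => if (i : ℕ) ∈ I then u i else univ with hw
    have hwmeas : ∀ i, MeasurableSet (w i) := by
      intro i
      by_cases h : (i : ℕ) ∈ I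
      · simpa [hw, h] using ((hu i h).1.measurableSet)
      · simp [hw, h]
    have hclaim : restrN (PSpace n a ε) N ⁻¹' (Set.pi univ w) ⊆ O := by
      intro t ht
      refine hsub ?_
      intro b hb
      have hbI : b ∈ I := hb
      have := ht (⟨b, hIN b hbI⟩ : Fin N) (Set.mem_univ _)
      simpa [hw, restrN, hbI] using this
    refine lt_of_lt_of_le ?_ (measure_mono hclaim)
    rw [← Measure.map_apply (measurable_restrN N) (MeasurableSet.univ_pi hwmeas), hmarg N,
      Measure.pi_pi]
    rw [CanonicallyOrderedAdd.prod_pos]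
    intro i _
    by_cases h : (i : ℕ) ∈ I
    · simpa [hw, h] using hν_pos _ (hu i h).1 ⟨ψ i, (hu i h).2⟩
    · simp [hw, h]
  -- Lévy's upward theorem for the product measure
  have hlevy := levy_product ν νinf hmarg hVmeas
  filter_upwards [hlevy] with t htlevy htV
  have htq := htlevy htV
  constructor
  · -- ω(U,t) ⊆ ⋃ closures
    rintro z ⟨u, nseq, hu, hmono, htend⟩
    have hclosed : IsClosed (⋃ i, closure (A i)) :=
      isClosed_iUnion_of_finite fun i => isClosed_closure
    refine hclosed.mem_of_tendsto htend (eventually_atTop.2 ⟨1, fun j hj => ?_⟩)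
    exact Set.mem_iUnion.2 ⟨⟨nseq j % l, Nat.mod_lt _ hl⟩,
      subset_closure (hUV _ (le_trans hj hmono.le_apply) _ (hu j) _ htV)⟩
  · rintro i z ⟨u, nseq, hu, hmono, htend⟩ hzi k hk ψ
    -- extract a subsequence with constant residue
    have hfreq : ∃ c : Fin l, ∃ᶠ j in atTop,
        (⟨nseq j % l, Nat.mod_lt _ hl⟩ : Fin l) = c := by
      by_contra hcon
      push_neg at hcon
      have hall : ∀ᶠ j in atTop, ∀ c : Fin l,
          (⟨nseq j % l, Nat.mod_lt _ hl⟩ : Fin l) ≠ c :=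
        Filter.eventually_all.2 fun c => hcon c
      obtain ⟨j, hj⟩ := hall.exists
      exact hj _ rfl
    obtain ⟨c, hfreqc⟩ := hfreq
    obtain ⟨φ, hφmono, hφ⟩ := Filter.extraction_of_frequently_atTop
      (hfreqc.and_eventually (eventually_ge_atTop 1))
    have hx1 : ∀ j, 1 ≤ nseq (φ j) := fun j =>
      le_trans (hφ j).2 hmono.le_apply
    have hxtend : Tendsto (fun j => pIter f (nseq (φ j)) (u (φ j)) t) atTop (𝓝 z) := by
      have h := htend.comp hφmono.tendsto_atTop
      exact h
    have hx_mem : ∀ j, pIter f (nseq (φ j)) (u (φ j)) t ∈ A c := by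
      intro j
      have h := hUV _ (hx1 j) _ (hu (φ j)) t htV
      exact (hφ j).1 ▸ h
    have hzc : z ∈ closure (A c) :=
      mem_closure_of_tendsto hxtend (Filter.Eventually.of_forall fun j => hx_mem j)
    have hci : c = i := by
      by_contra hne
      have h0 := hAsep c i hne
      exact absurd (h0 ▸ (Set.mem_inter hzc hzi) : z ∈ (∅ : Set M)) (Set.notMem_empty z)
    subst hci
    set c' : Fin l := ⟨((c : ℕ) + k) % l, Nat.mod_lt _ hl⟩ with hc'
    -- the tail sets
    set Cs : ℕ → Set (ℕ → (PSpace n a ε)) := fun j =>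
      {s | appMap (PSpace n a ε) (nseq (φ j)) (restrN (PSpace n a ε) (nseq (φ j)) t, s) ∈ V} with hCs
    have hCmeas : ∀ j, MeasurableSet (Cs j) := fun j =>
      (measurable_appMap _).comp measurable_prodMk_left hVmeas
    have hC : ∀ j, Cs j ⊆
        {s | pIter f k (pIter f (nseq (φ j)) (u (φ j)) t) s ∈ A c'} := by
      intro j s hs
      set N := nseq (φ j) with hNdef
      have hts := hUV (N + k) (by omega) _ (hu (φ j)) _ hs
      rw [pIter_add] at hts
      have h1 : pIter f N (u (φ j)) (appMap (PSpace n a ε) N (restrN (PSpace n a ε) N t, s)) =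
          pIter f N (u (φ j)) t := by
        refine pIter_congr _ _ _ fun i hi => ?_
        simp only [appMap, dif_pos hi]
        rfl
      have h2 : (fun i => appMap (PSpace n a ε) N (restrN (PSpace n a ε) N t, s) (N + i)) = s := by
        funext i
        have hni : ¬(N + i < N) := by omega
        simp only [appMap, dif_neg hni]
        congr 1
        omega
      rw [h1, h2] at hts
      have hcN : N % l = (c : ℕ) := congrArg Fin.val (hφ j).1
      have hmod : (N + k) % l = ((c : ℕ) + k) % l := by
        have hNc : N ≡ (c : ℕ) [MOD l] := by
          unfold Nat.ModEq
          rw [hcN, Nat.mod_eq_of_lt c.isLt]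
        exact hNc.add_right k
      have hfin : (⟨(N + k) % l, Nat.mod_lt _ hl⟩ : Fin l) = c' := Fin.ext hmod
      rwa [hfin] at hts
    -- measure of the limsup of the `Cs j` is one
    have hqj : Tendsto (fun j => (νinf (Cs j)).toReal) atTop (𝓝 1) :=
      htq.comp (hmono.comp hφmono).tendsto_atTop
    have hEnull : ∀ J : ℕ, νinf ((⋃ j, ⋃ (_ : J ≤ j), Cs j)ᶜ) = 0 := by
      intro J
      set E := (⋃ j, ⋃ (_ : J ≤ j), Cs j)ᶜ with hE
      have hle : ∀ j, J ≤ j → νinf E ≤ 1 - νinf (Cs j) := by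
        intro j hj
        have hsub' : E ⊆ (Cs j)ᶜ := by
          rw [hE]
          exact Set.compl_subset_compl.2 (Set.subset_iUnion₂ (s := fun j _ => Cs j) j hj)
        refine le_trans (measure_mono hsub') ?_
        rw [measure_compl (hCmeas j) (measure_ne_top _ _), measure_univ]
      have hletoReal : ∀ᶠ j in atTop, (νinf E).toReal ≤ 1 - (νinf (Cs j)).toReal := by
        refine eventually_atTop.2 ⟨J, fun j hj => ?_⟩
        have h1 := hle j hj
        have := ENNReal.toReal_mono (by
          exact (tsub_le_self.trans_lt (lt_of_le_of_lt le_rfl ENNReal.one_lt_top)).ne) h1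
        rw [ENNReal.toReal_sub_of_le (measure_mono (Set.subset_univ _) |>.trans
          measure_univ.le) ENNReal.one_ne_top] at this
        simpa using this
      have hlim : Tendsto (fun j => 1 - (νinf (Cs j)).toReal) atTop (𝓝 0) := by
        have := hqj.const_sub 1
        simpa using this
      have hle0 : (νinf E).toReal ≤ 0 := ge_of_tendsto hlim hletoReal
      have h0 : (νinf E).toReal = 0 := le_antisymm hle0 ENNReal.toReal_nonneg
      rcases (ENNReal.toReal_eq_zero_iff _).mp h0 with h | h
      · exact h
      · exact absurd h (measure_ne_top _ _)
    have hDnull : νinf ((⋂ J : ℕ, ⋃ j, ⋃ (_ : J ≤ j), Cs j)ᶜ) = 0 := by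
      rw [Set.compl_iInter]
      exact measure_iUnion_null fun J => hEnull J
    -- the set of good tails is contained in H
    have hDH : (⋂ J : ℕ, ⋃ j, ⋃ (_ : J ≤ j), Cs j) ⊆
        {s | pIter f k z s ∈ closure (A c')} := by
      intro s hs
      have hfr : ∃ᶠ j in atTop, s ∈ Cs j := by
        rw [Filter.frequently_atTop]
        intro J
        obtain ⟨j, hj, hsj⟩ := Set.mem_iUnion₂.mp (Set.mem_iInter.mp hs J)
        exact ⟨j, hj, hsj⟩
      have hcont : Continuous fun wq : M => pIter f k wq s :=
        (pIter_continuous hfc k).comp (continuous_id.prodMk continuous_const)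
      have htends : Tendsto (fun j => pIter f k (pIter f (nseq (φ j)) (u (φ j)) t) s)
          atTop (𝓝 (pIter f k z s)) := (hcont.tendsto z).comp hxtend
      exact mem_closure_of_frequently_of_tendsto
        (hfr.mono fun j hj => hC j hj) htends
    -- H is closed with full measure, hence everything
    have hHclosed : IsClosed {s : ℕ → (PSpace n a ε) | pIter f k z s ∈ closure (A c')} := by
      have hcont : Continuous fun s : ℕ → (PSpace n a ε) => pIter f k z s :=
        (pIter_continuous hfc k).comp (continuous_const.prodMk continuous_id)
      exact IsClosed.preimage hcont isClosed_closure
    have hHnull : νinf ({s : ℕ → (PSpace n a ε) | pIter f k z s ∈ closure (A c')}ᶜ) = 0 :=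
      measure_mono_null (Set.compl_subset_compl.2 hDH) hDnull
    by_contra hcon
    have hne : ({s : ℕ → (PSpace n a ε) | pIter f k z s ∈ closure (A c')}ᶜ).Nonempty := ⟨ψ, hcon⟩
    exact absurd hHnull (hsupp _ hHclosed.isOpen_compl hne).ne'

end
end

section
/- Assume the setting and hypothesis (A). Let D = (𝒰₀,…,𝒰_{r−1}) be an s-invariant domain and let C ⊆ 𝒰₀ ∪ ⋯ ∪ 𝒰_{r−1} be a nonempty c-invariant set. Then the closure of C contains an s-invariant domain: there exists an s-invariant domain D̃ = (𝒰'₀,…,𝒰'_{r−1}) of the same period with 𝒰'_i ⊆ 𝒰_i for each i and 𝒰'₀ ∪ ⋯ ∪ 𝒰'_{r−1} ⊆ closure(C). -/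
open MeasureTheory Metric Set Filter Topology

noncomputable section

/-- Each perturbed iterate (with fixed perturbation sequence) is a homeomorphism. -/
lemma pIter_isHomeomorph' {M T : Type*} [TopologicalSpace M] {f : M → T → M}
    (hfh : ∀ t : T, IsHomeomorph fun z : M => f z t) (t : ℕ → T) :
    ∀ k : ℕ, IsHomeomorph (fun z : M => pIter f k z t)
  | 0 => IsHomeomorph.id
  | (k + 1) => by
      have h := (hfh (t k)).comp (pIter_isHomeomorph' hfh t k)
      exact h

/-- Under hypothesis (A), every nonempty c-invariant subset of an
s-invariant domain contains, inside its closure, an s-invariant domain of the same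
period with correspondingly smaller open sets. -/
theorem statement5
    (n : ℕ) (hn : 1 ≤ n) (a : EuclideanSpace ℝ (Fin n)) (ε : ℝ) (hε : 0 < ε)
    (a₀ : PSpace n a ε) (ha₀ : (a₀ : EuclideanSpace ℝ (Fin n)) = a)
    (ν : Measure (PSpace n a ε))
    (hν : ν = (volume (Metric.closedBall a ε))⁻¹ •
      ((volume : Measure (EuclideanSpace ℝ (Fin n))).comap Subtype.val))
    (νinf : Measure (ℕ → PSpace n a ε)) (hprobν : IsProbabilityMeasure νinf)
    (hνinf : ∀ k : ℕ, νinf.map (fun t (i : Fin k) => t i) = Measure.pi fun _ => ν)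
    (M : Type*) [MetricSpace M] [CompactSpace M] [MeasurableSpace M] [BorelSpace M]
    (m : Measure M) (hmprob : IsProbabilityMeasure m)
    (hmpos : ∀ O : Set M, IsOpen O → O.Nonempty → 0 < m O)
    (f : M → PSpace n a ε → M)
    (hfc : Continuous fun p : M × PSpace n a ε => f p.1 p.2)
    (hfh : ∀ t : PSpace n a ε, IsHomeomorph fun z : M => f z t)
    (hfnull : ∀ (t : PSpace n a ε) (A : Set M), m A = 0 →
      m ((fun z => f z t) '' A) = 0 ∧ m ((fun z => f z t) ⁻¹' A) = 0)
    (K : ℕ) (ξ₀ : ℝ) (hξ₀ : 0 < ξ₀)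
    (hypA : ∀ k : ℕ, K ≤ k → ∀ x : M,
      Metric.ball (pIter f k x fun _ => a₀) ξ₀ ⊆ Set.range (pIter f k x))
    (D : SInvDomain f) (C : Set M) (hCne : C.Nonempty)
    (hCsub : C ⊆ D.carrier) (hCinv : CInvariant f C) :
    ∃ D' : SInvDomain f, ∃ hr : D'.r = D.r,
      (∀ i : Fin D'.r, D'.U i ⊆ D.U (Fin.cast hr i)) ∧ D'.carrier ⊆ closure C := by
  classical
  obtain ⟨x₀, hx₀C⟩ := hCne
  obtain ⟨i₀, hx₀U⟩ : ∃ i, x₀ ∈ D.U i := by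
    have := hCsub hx₀C
    simpa [SInvDomain.carrier] using this
  have hr0 : 0 < D.r := D.r_pos
  -- key : each C ∩ U j contains an open ball
  have key : ∀ j : Fin D.r, ∃ y : M, Metric.ball y ξ₀ ⊆ C ∩ D.U j := by
    intro j
    set x : ℕ := ((j : ℕ) + D.r - (i₀ : ℕ)) % D.r with hxdef
    set k : ℕ := x + (K + 1) * D.r with hkdef
    have hK1 : K + 1 ≤ (K + 1) * D.r := Nat.le_mul_of_pos_right (K + 1) hr0
    have hk1 : 1 ≤ k := by omega
    have hkK : K ≤ k := by omega
    have hmod : ((i₀ : ℕ) + k) % D.r = (j : ℕ) := by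
      have hi : (i₀ : ℕ) < D.r := i₀.isLt
      have hj : (j : ℕ) < D.r := j.isLt
      calc ((i₀ : ℕ) + (x + (K + 1) * D.r)) % D.r
          = (((i₀ : ℕ) + x) + (K + 1) * D.r) % D.r := by rw [add_assoc]
        _ = ((i₀ : ℕ) + x) % D.r := Nat.add_mul_mod_self_right _ _ _
        _ = ((i₀ : ℕ) + ((j : ℕ) + D.r - (i₀ : ℕ))) % D.r := Nat.add_mod_mod _ _ _
        _ = ((j : ℕ) + D.r) % D.r := by congr 1; omega
        _ = (j : ℕ) := by rw [Nat.add_mod_right]; exact Nat.mod_eq_of_lt hj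
    refine ⟨pIter f k x₀ (fun _ => a₀), fun w hw => ?_⟩
    obtain ⟨t, ht⟩ := hypA k hkK x₀ hw
    have hidx : (⟨((i₀ : ℕ) + k) % D.r, Nat.mod_lt _ D.r_pos⟩ : Fin D.r) = j :=
      Fin.ext hmod
    refine ⟨ht ▸ hCinv x₀ hx₀C t k hk1, ?_⟩
    have := D.invariant k hk1 i₀ x₀ hx₀U t
    rw [hidx] at this
    exact ht ▸ this
  refine ⟨⟨D.r, D.r_pos,
    fun j => interior (closure (C ∩ D.U j)) ∩ D.U j,
    fun j => isOpen_interior.inter (D.isOpen j),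
    ?_, ?_, ?_⟩, rfl, ?_, ?_⟩
  · -- nonempty
    intro j
    obtain ⟨y, hy⟩ := key j
    have hball : Metric.ball y ξ₀ ⊆ interior (closure (C ∩ D.U j)) :=
      interior_maximal (hy.trans subset_closure) Metric.isOpen_ball
    exact ⟨y, hball (Metric.mem_ball_self hξ₀), (hy (Metric.mem_ball_self hξ₀)).2⟩
  · -- separated
    intro i j hij
    apply Set.eq_empty_of_subset_empty
    rw [← D.separated i j hij]
    exact Set.inter_subset_inter
      (closure_mono (Set.inter_subset_right))
      (closure_mono (Set.inter_subset_right))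
  · -- invariance
    intro k hk i z hz t
    have hhom := pIter_isHomeomorph' hfh t k
    set jdx : Fin D.r := ⟨((i : ℕ) + k) % D.r, Nat.mod_lt _ D.r_pos⟩ with hjdx
    have himg : (fun z : M => pIter f k z t) '' (C ∩ D.U i) ⊆ C ∩ D.U jdx := by
      rintro _ ⟨u, ⟨huC, huU⟩, rfl⟩
      exact ⟨hCinv u huC t k hk, D.invariant k hk i u huU t⟩
    have h2 : (fun z : M => pIter f k z t) '' interior (closure (C ∩ D.U i)) ⊆
        interior (closure (C ∩ D.U jdx)) := by
      apply interior_maximal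
      · calc (fun z : M => pIter f k z t) '' interior (closure (C ∩ D.U i))
            ⊆ (fun z : M => pIter f k z t) '' closure (C ∩ D.U i) :=
              Set.image_mono interior_subset
          _ ⊆ closure ((fun z : M => pIter f k z t) '' (C ∩ D.U i)) :=
              image_closure_subset_closure_image hhom.continuous
          _ ⊆ closure (C ∩ D.U jdx) := closure_mono himg
      · exact hhom.isOpenMap _ isOpen_interior
    exact ⟨h2 ⟨z, hz.1, rfl⟩, D.invariant k hk i z hz.2 t⟩
  · -- U' i ⊆ U i
    intro i
    exact Set.inter_subset_right
  · -- carrier ⊆ closure C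
    intro w hw
    obtain ⟨i, hwi⟩ := by simpa [SInvDomain.carrier] using hw
    exact closure_mono Set.inter_subset_left (interior_subset hwi.1)

end
end
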